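/- Suppose that for every ω ∈ W the function f(·,ω) is convex, the mapping G is (−K)-convex, and x* is a feasible point of the problem (P). Then λ* ∈ K* is a Lagrange multiplier of (P) at x* if and only if (x*,λ*) is a global saddle point of the Lagrangian, i.e. L(x,λ*) ≥ F(x*) ≥ L(x*,λ) for all x ∈ A and all λ ∈ K*. -/

import Mathlib

open Set Filter Topology Pointwise
open scoped RealInnerProductSpace

noncomputable section

/-- The contingent (Bouligand tangent) cone to a set `C` at a point `x`. -/
def contingentCone {X : Type*} [NormedAddCommGroup X] [NormedSpace ℝ X]
    (C : Set X) (x : X) : Set X :=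
  {h | ∃ (a : ℕ → ℝ) (v : ℕ → X), (∀ n, 0 < a n) ∧
    Tendsto a atTop (𝓝 0) ∧ Tendsto v atTop (𝓝 h) ∧ ∀ n, x + a n • v n ∈ C}

/-- Robinson's constraint qualification at a feasible point `x`. -/
def RobinsonCQ {d : ℕ} {Y : Type*} [NormedAddCommGroup Y] [NormedSpace ℝ Y]
    (G : EuclideanSpace ℝ (Fin d) → Y) (K : Set Y)
    (A : Set (EuclideanSpace ℝ (Fin d))) (x : EuclideanSpace ℝ (Fin d)) : Prop :=
  (0 : Y) ∈ interior {y | ∃ a ∈ A, ∃ k ∈ K, y = G x + fderiv ℝ G x (a - x) - k}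

variable {d : ℕ} {W : Type*} [TopologicalSpace W]
variable {Y : Type*} [NormedAddCommGroup Y] [NormedSpace ℝ Y]

/-- `F(x) = max_{ω ∈ W} f(x, ω)` (as a supremum). -/
def Fmax (f : EuclideanSpace ℝ (Fin d) → W → ℝ) (x : EuclideanSpace ℝ (Fin d)) : ℝ :=
  sSup (range fun ω => f x ω)

/-- `W(x) = {ω ∈ W | f(x, ω) = F(x)}`, the set of active indices. -/
def activeSet (f : EuclideanSpace ℝ (Fin d) → W → ℝ) (x : EuclideanSpace ℝ (Fin d)) : Set W :=
  {ω | f x ω = Fmax f x}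

/-- The set of active gradients `{∇ₓ f(x, ω) | ω ∈ W(x)}`. -/
def activeGrads (f : EuclideanSpace ℝ (Fin d) → W → ℝ) (x : EuclideanSpace ℝ (Fin d)) :
    Set (EuclideanSpace ℝ (Fin d)) :=
  (fun ω => gradient (fun z => f z ω) x) '' activeSet f x

/-- The directional derivative `F'(x, h) = max_{ω ∈ W(x)} ⟨∇ₓ f(x, ω), h⟩` of the max-function. -/
def Fdir (f : EuclideanSpace ℝ (Fin d) → W → ℝ) (x h : EuclideanSpace ℝ (Fin d)) : ℝ :=
  sSup ((fun v => ⟪v, h⟫) '' activeGrads f x)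

/-- The Hadamard subdifferential `∂F(x) = co {∇ₓ f(x, ω) | ω ∈ W(x)}` of the max-function. -/
def subdiffF (f : EuclideanSpace ℝ (Fin d) → W → ℝ) (x : EuclideanSpace ℝ (Fin d)) :
    Set (EuclideanSpace ℝ (Fin d)) :=
  convexHull ℝ (activeGrads f x)

/-- The polar cone of a set in `ℝ^d`. -/
def polarCone {d : ℕ} (C : Set (EuclideanSpace ℝ (Fin d))) : Set (EuclideanSpace ℝ (Fin d)) :=
  {v | ∀ h ∈ C, ⟪v, h⟫ ≤ 0}

/-- The normal cone `N_A(x)` to `A` at `x`, i.e. the polar of the contingent cone. -/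
def normalCone {d : ℕ} (A : Set (EuclideanSpace ℝ (Fin d))) (x : EuclideanSpace ℝ (Fin d)) :
    Set (EuclideanSpace ℝ (Fin d)) :=
  polarCone (contingentCone A x)

/-- The polar cone `K* = {y* | ⟨y*, y⟩ ≤ 0 ∀ y ∈ K}` of `K ⊆ Y` in the dual space. -/
def dualPolar (K : Set Y) : Set (Y →L[ℝ] ℝ) :=
  {l | ∀ y ∈ K, l y ≤ 0}

/-- The cone `𝒩(x) = [DG(x)]*(K* ∩ lin(G(x))^⊥)`. -/
def calN (G : EuclideanSpace ℝ (Fin d) → Y) (K : Set Y) (x : EuclideanSpace ℝ (Fin d)) :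
    Set (EuclideanSpace ℝ (Fin d)) :=
  {v | ∃ l : Y →L[ℝ] ℝ, l ∈ dualPolar K ∧ l (G x) = 0 ∧
    ∀ u : EuclideanSpace ℝ (Fin d), ⟪v, u⟫ = l (fderiv ℝ G x u)}

/-- `λ` is a Lagrange multiplier of problem (P) at a feasible point `x`:
`λ ∈ K*`, `⟨λ, G(x)⟩ = 0` and `[L(·,λ)]'(x, h) ≥ 0` for all `h ∈ T_A(x)`, where the
directional derivative of the Lagrangian equals `F'(x,h) + ⟨λ, DG(x) h⟩`. -/
def IsLagrangeMult (f : EuclideanSpace ℝ (Fin d) → W → ℝ) (G : EuclideanSpace ℝ (Fin d) → Y)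
    (K : Set Y) (A : Set (EuclideanSpace ℝ (Fin d))) (x : EuclideanSpace ℝ (Fin d))
    (l : Y →L[ℝ] ℝ) : Prop :=
  l ∈ dualPolar K ∧ l (G x) = 0 ∧
    ∀ h ∈ contingentCone A x, 0 ≤ Fdir f x h + l (fderiv ℝ G x h)


/-! ### Auxiliary lemmas -/

section Aux

lemma deriv_le_sub_aux (g : ℝ → ℝ) (hconv : ConvexOn ℝ Set.univ g) {g' : ℝ}
    (hd : HasDerivAt g g' 0) : g' ≤ g 1 - g 0 := by
  have ht : Tendsto (slope g 0) (𝓝[>] (0:ℝ)) (𝓝 g') :=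
    (hasDerivAt_iff_tendsto_slope.mp hd).mono_left
      (nhdsWithin_mono _ fun x hx => Set.mem_compl_singleton_iff.mpr (ne_of_gt hx))
  refine le_of_tendsto ht ?_
  filter_upwards [Ioo_mem_nhdsGT (one_pos)] with t ht'
  obtain ⟨ht0, ht1⟩ := ht'
  have h2 := hconv.2 (mem_univ (1:ℝ)) (mem_univ (0:ℝ)) ht0.le (by linarith : (0:ℝ) ≤ 1 - t)
    (by ring)
  simp only [smul_eq_mul, mul_one, mul_zero, add_zero] at h2
  have hs : slope g 0 t = (g t - g 0) / t := by simp [slope_def_field]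
  rw [hs, div_le_iff₀ ht0]
  nlinarith

lemma convex_fderiv_le_aux {E : Type*} [NormedAddCommGroup E] [NormedSpace ℝ E]
    (ψ : E → ℝ) (hconv : ConvexOn ℝ Set.univ ψ) (hdiff : Differentiable ℝ ψ) (z y : E) :
    fderiv ℝ ψ z (y - z) ≤ ψ y - ψ z := by
  set g : ℝ → ℝ := fun t => ψ (t • (y - z) + z) with hgdef
  have hgc : ConvexOn ℝ Set.univ g := by
    have := hconv.comp_affineMap (AffineMap.lineMap z y)
    simpa [Function.comp_def, AffineMap.lineMap_apply, hgdef] using this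
  have hc : HasDerivAt (fun t : ℝ => t • (y - z) + z) (y - z) 0 := by
    simpa using ((hasDerivAt_id (0:ℝ)).smul_const (y - z)).add_const z
  have hgd : HasDerivAt g (fderiv ℝ ψ z (y - z)) 0 := by
    have h1 : HasFDerivAt ψ (fderiv ℝ ψ z) ((0:ℝ) • (y - z) + z) := by
      simpa using (hdiff z).hasFDerivAt
    simpa [Function.comp_def, hgdef] using h1.comp_hasDerivAt 0 hc
  have := deriv_le_sub_aux g hgc hgd
  simpa [hgdef] using this

variable [CompactSpace W] [Nonempty W] {f : EuclideanSpace ℝ (Fin d) → W → ℝ}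

omit [CompactSpace W] [Nonempty W] in
lemma fx_cont (hfc : Continuous fun p : EuclideanSpace ℝ (Fin d) × W => f p.1 p.2)
    (x : EuclideanSpace ℝ (Fin d)) : Continuous fun ω => f x ω :=
  hfc.comp (continuous_const.prodMk continuous_id)

omit [Nonempty W] in
lemma Fmax_bdd (hfc : Continuous fun p : EuclideanSpace ℝ (Fin d) × W => f p.1 p.2)
    (x : EuclideanSpace ℝ (Fin d)) : BddAbove (range fun ω => f x ω) :=
  (isCompact_range (fx_cont hfc x)).bddAbove

omit [Nonempty W] in
lemma le_Fmax (hfc : Continuous fun p : EuclideanSpace ℝ (Fin d) × W => f p.1 p.2)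
    (x : EuclideanSpace ℝ (Fin d)) (ω : W) : f x ω ≤ Fmax f x :=
  le_csSup (Fmax_bdd hfc x) ⟨ω, rfl⟩

lemma exists_active (hfc : Continuous fun p : EuclideanSpace ℝ (Fin d) × W => f p.1 p.2)
    (x : EuclideanSpace ℝ (Fin d)) : ∃ ω, ω ∈ activeSet f x := by
  obtain ⟨ω, -, hω⟩ := isCompact_univ.exists_isMaxOn univ_nonempty (fx_cont hfc x).continuousOn
  refine ⟨ω, le_antisymm (le_Fmax hfc x ω) (csSup_le (range_nonempty _) ?_)⟩
  rintro r ⟨ω', rfl⟩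
  exact hω (mem_univ ω')

lemma Fmax_convex (hfc : Continuous fun p : EuclideanSpace ℝ (Fin d) × W => f p.1 p.2)
    (hfconv : ∀ ω, ConvexOn ℝ Set.univ (fun x => f x ω)) :
    ConvexOn ℝ Set.univ (Fmax f) := by
  refine ⟨convex_univ, fun x _ y _ a b ha hb hab => ?_⟩
  refine csSup_le (range_nonempty _) ?_
  rintro r ⟨ω, rfl⟩
  calc f (a • x + b • y) ω ≤ a * f x ω + b * f y ω := by
        simpa using (hfconv ω).2 (mem_univ x) (mem_univ y) ha hb hab
    _ ≤ a * Fmax f x + b * Fmax f y := by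
        have h1 := le_Fmax hfc x ω
        have h2 := le_Fmax hfc y ω
        nlinarith

omit [CompactSpace W] [Nonempty W] in
lemma grad_cont (hfg : Continuous fun p : EuclideanSpace ℝ (Fin d) × W =>
      gradient (fun z => f z p.2) p.1) (x : EuclideanSpace ℝ (Fin d)) :
    Continuous fun ω => gradient (fun z => f z ω) x :=
  hfg.comp (continuous_const.prodMk continuous_id)

omit [Nonempty W] in
lemma activeGrads_compact (hfc : Continuous fun p : EuclideanSpace ℝ (Fin d) × W => f p.1 p.2)
    (hfg : Continuous fun p : EuclideanSpace ℝ (Fin d) × W => gradient (fun z => f z p.2) p.1)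
    (x : EuclideanSpace ℝ (Fin d)) : IsCompact (activeGrads f x) := by
  have hcl : IsClosed (activeSet f x) := isClosed_eq (fx_cont hfc x) continuous_const
  exact (hcl.isCompact).image (grad_cont hfg x)

lemma activeGrads_nonempty (hfc : Continuous fun p : EuclideanSpace ℝ (Fin d) × W => f p.1 p.2)
    (x : EuclideanSpace ℝ (Fin d)) : (activeGrads f x).Nonempty := by
  obtain ⟨ω, hω⟩ := exists_active hfc x
  exact ⟨_, mem_image_of_mem _ hω⟩

omit [Nonempty W] in
lemma inner_bdd (hfc : Continuous fun p : EuclideanSpace ℝ (Fin d) × W => f p.1 p.2)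
    (hfg : Continuous fun p : EuclideanSpace ℝ (Fin d) × W => gradient (fun z => f z p.2) p.1)
    (x h : EuclideanSpace ℝ (Fin d)) :
    BddAbove ((fun v => ⟪v, h⟫) '' activeGrads f x) :=
  ((activeGrads_compact hfc hfg x).image (continuous_id.inner continuous_const)).bddAbove

omit [Nonempty W] in
lemma le_Fdir (hfc : Continuous fun p : EuclideanSpace ℝ (Fin d) × W => f p.1 p.2)
    (hfg : Continuous fun p : EuclideanSpace ℝ (Fin d) × W => gradient (fun z => f z p.2) p.1)
    {x v : EuclideanSpace ℝ (Fin d)} (hv : v ∈ activeGrads f x) (h : EuclideanSpace ℝ (Fin d)) :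
    ⟪v, h⟫ ≤ Fdir f x h :=
  le_csSup (inner_bdd hfc hfg x h) (mem_image_of_mem _ hv)

lemma Fdir_le (hfc : Continuous fun p : EuclideanSpace ℝ (Fin d) × W => f p.1 p.2)
    {x h : EuclideanSpace ℝ (Fin d)} {b : ℝ}
    (hb : ∀ v ∈ activeGrads f x, ⟪v, h⟫ ≤ b) : Fdir f x h ≤ b := by
  refine csSup_le ((activeGrads_nonempty hfc x).image _) ?_
  rintro r ⟨v, hv, rfl⟩
  exact hb v hv

omit [CompactSpace W] [Nonempty W] in
lemma Fdir_smul (x : EuclideanSpace ℝ (Fin d)) {c : ℝ} (hc : 0 ≤ c)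
    (h : EuclideanSpace ℝ (Fin d)) : Fdir f x (c • h) = c * Fdir f x h := by
  have himg : (fun v => ⟪v, c • h⟫) '' activeGrads f x
      = c • ((fun v => ⟪v, h⟫) '' activeGrads f x) := by
    rw [← Set.image_smul, Set.image_image]
    exact Set.image_congr fun v _ => by rw [real_inner_smul_right, smul_eq_mul]
  rw [Fdir, himg, Real.sSup_smul_of_nonneg hc, smul_eq_mul, Fdir]

end Aux

/-!
Statement 4 (convex case): λ* ∈ K* is a Lagrange multiplier of (P) at a feasible point x*
if and only if (x*, λ*) is a global saddle point of the Lagrangian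
L(x,λ) = F(x) + ⟨λ, G(x)⟩, i.e. L(x,λ*) ≥ F(x*) ≥ L(x*,λ) for all x ∈ A and λ ∈ K*.
-/
theorem lagrange_multiplier_iff_saddle_point
    {d : ℕ} {W : Type*} [TopologicalSpace W] [CompactSpace W] [T2Space W] [Nonempty W]
    {Y : Type*} [NormedAddCommGroup Y] [NormedSpace ℝ Y] [CompleteSpace Y]
    (A : Set (EuclideanSpace ℝ (Fin d))) (K : Set Y)
    (G : EuclideanSpace ℝ (Fin d) → Y) (f : EuclideanSpace ℝ (Fin d) → W → ℝ)
    (hAne : A.Nonempty) (hAcl : IsClosed A) (hAconv : Convex ℝ A)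
    (hKne : K.Nonempty) (hKcl : IsClosed K) (hKconv : Convex ℝ K)
    (hKcone : ∀ (c : ℝ), 0 ≤ c → ∀ y ∈ K, c • y ∈ K)
    (hG : ContDiff ℝ 1 G)
    (hfdiff : ∀ ω, Differentiable ℝ (fun x => f x ω))
    (hfc : Continuous fun p : EuclideanSpace ℝ (Fin d) × W => f p.1 p.2)
    (hfg : Continuous fun p : EuclideanSpace ℝ (Fin d) × W => gradient (fun z => f z p.2) p.1)
    (hfconv : ∀ ω, ConvexOn ℝ Set.univ (fun x => f x ω))
    (hGconv : ∀ (x₁ x₂ : EuclideanSpace ℝ (Fin d)) (a : ℝ), 0 ≤ a → a ≤ 1 →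
      G (a • x₁ + (1 - a) • x₂) - a • G x₁ - (1 - a) • G x₂ ∈ K)
    (xs : EuclideanSpace ℝ (Fin d)) (hxA : xs ∈ A) (hxK : G xs ∈ K)
    (l : Y →L[ℝ] ℝ) (hl : l ∈ dualPolar K) :
    IsLagrangeMult f G K A xs l ↔
      ((∀ x ∈ A, Fmax f xs ≤ Fmax f x + l (G x)) ∧
       (∀ m ∈ dualPolar K, Fmax f xs + m (G xs) ≤ Fmax f xs)) := by
  have hGdiff : Differentiable ℝ G := hG.differentiable one_ne_zero
  have hlGconv : ConvexOn ℝ Set.univ (fun x => l (G x)) := by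
    refine ⟨convex_univ, fun x _ y _ a b ha hb hab => ?_⟩
    have hb' : b = 1 - a := by linarith
    subst hb'
    have hK := hGconv x y a ha (by linarith)
    have hlK := hl _ hK
    simp only [map_sub, map_smul, smul_eq_mul] at hlK
    simp only [smul_eq_mul]
    linarith
  have hlGdiff : Differentiable ℝ (fun x => l (G x)) := l.differentiable.comp hGdiff
  have hlGfderiv : ∀ (z v : EuclideanSpace ℝ (Fin d)),
      fderiv ℝ (fun x => l (G x)) z v = l (fderiv ℝ G z v) := by
    intro z v
    have heq : fderiv ℝ (fun x => l (G x)) z = l.comp (fderiv ℝ G z) :=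
      (l.hasFDerivAt.comp z (hGdiff z).hasFDerivAt).fderiv
    rw [heq]; rfl
  have hgradineq : ∀ (ω : W) (z y : EuclideanSpace ℝ (Fin d)),
      ⟪gradient (fun x => f x ω) z, y - z⟫ ≤ f y ω - f z ω := by
    intro ω z y
    have h1 : ⟪gradient (fun x => f x ω) z, y - z⟫ = fderiv ℝ (fun x => f x ω) z (y - z) := by
      rw [gradient]; exact InnerProductSpace.toDual_symm_apply
    rw [h1]
    exact convex_fderiv_le_aux _ (hfconv ω) (hfdiff ω) z y
  constructor
  · rintro ⟨-, hG0, hdir⟩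
    constructor
    · intro x hxA'
      have hcc : (x - xs) ∈ contingentCone A xs := by
        refine ⟨fun n => 1 / (n + 1), fun _ => x - xs, fun n => by positivity,
          tendsto_one_div_add_atTop_nhds_zero_nat, tendsto_const_nhds, fun n => ?_⟩
        have ha0 : (0:ℝ) ≤ 1 / (n + 1) := by positivity
        have ha1 : (1:ℝ) / (n + 1) ≤ 1 := by
          rw [div_le_one (by positivity)]
          linarith [Nat.cast_nonneg (α := ℝ) n]
        have hmem := hAconv hxA' hxA ha0 (by linarith : (0:ℝ) ≤ 1 - 1/(n+1)) (by ring)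
        convert hmem using 1
        module
      have hkey := hdir _ hcc
      have h1 : Fdir f xs (x - xs) ≤ Fmax f x - Fmax f xs := by
        refine Fdir_le hfc ?_
        rintro v ⟨ω, hω, rfl⟩
        calc ⟪gradient (fun z => f z ω) xs, x - xs⟫ ≤ f x ω - f xs ω := hgradineq ω xs x
          _ = f x ω - Fmax f xs := by rw [hω]
          _ ≤ Fmax f x - Fmax f xs := by linarith [le_Fmax hfc x ω]
      have h2 : l (fderiv ℝ G xs (x - xs)) ≤ l (G x) := by
        have h3 := convex_fderiv_le_aux _ hlGconv hlGdiff xs x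
        rw [hlGfderiv] at h3
        simpa [hG0] using h3
      linarith
    · intro m hm
      have := hm _ hxK
      linarith
  · rintro ⟨hs1, -⟩
    have hG0 : l (G xs) = 0 := by
      have h1 := hl _ hxK
      have h2 := hs1 xs hxA
      linarith
    refine ⟨hl, hG0, ?_⟩
    have key : ∀ x ∈ A, 0 ≤ Fdir f xs (x - xs) + l (fderiv ℝ G xs (x - xs)) := by
      intro x hxA'
      set h : EuclideanSpace ℝ (Fin d) := x - xs with hh
      set t : ℕ → ℝ := fun n => 1 / (n + 1) with htdef
      have ht0 : ∀ n, 0 < t n := fun n => by positivity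
      have ht1 : ∀ n, t n ≤ 1 := fun n => by
        rw [htdef]
        rw [div_le_one (by positivity)]
        linarith [Nat.cast_nonneg (α := ℝ) n]
      have htt : Tendsto t atTop (𝓝 0) := tendsto_one_div_add_atTop_nhds_zero_nat
      set z : ℕ → EuclideanSpace ℝ (Fin d) := fun n => xs + t n • h with hzdef
      have hzA : ∀ n, z n ∈ A := by
        intro n
        have hmem := hAconv hxA' hxA (ht0 n).le (by linarith [ht1 n] : (0:ℝ) ≤ 1 - t n) (by ring)
        show xs + t n • h ∈ A
        convert hmem using 1
        rw [hh]; module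
      choose ω hω using fun n => exists_active hfc (z n)
      obtain ⟨ωb, hωb⟩ := exists_clusterPt_of_compactSpace (map ω atTop)
      have h𝒢 : (atTop ⊓ comap ω (𝓝 ωb)).NeBot := by
        have h1 : (𝓝 ωb ⊓ map ω atTop).NeBot := hωb
        have h2 : (map ω (atTop ⊓ comap ω (𝓝 ωb))).NeBot := by
          rwa [Filter.push_pull, inf_comm]
        exact (Filter.map_neBot_iff ω).mp h2
      set 𝒢 : Filter ℕ := atTop ⊓ comap ω (𝓝 ωb) with h𝒢def
      have htω : Tendsto ω 𝒢 (𝓝 ωb) := tendsto_comap.mono_left inf_le_right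
      have htt' : Tendsto t 𝒢 (𝓝 0) := htt.mono_left inf_le_left
      have htz : Tendsto z 𝒢 (𝓝 xs) := by
        have h1 : Tendsto (fun n => xs + t n • h) 𝒢 (𝓝 (xs + (0:ℝ) • h)) :=
          tendsto_const_nhds.add (htt'.smul_const h)
        simpa using h1
      set q : ℕ → ℝ := fun n => ⟪gradient (fun x' => f x' (ω n)) (z n), h⟫ with hqdef
      set Q : ℝ := ⟪gradient (fun x' => f x' ωb) xs, h⟫ with hQdef
      have htq : Tendsto q 𝒢 (𝓝 Q) := by
        have h1 : Tendsto (fun n => (z n, ω n)) 𝒢 (𝓝 (xs, ωb)) := htz.prodMk_nhds htω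
        have h2 : Tendsto (fun n => gradient (fun x' => f x' (ω n)) (z n)) 𝒢
            (𝓝 (gradient (fun x' => f x' ωb) xs)) := (hfg.tendsto _).comp h1
        exact h2.inner tendsto_const_nhds
      set r : ℕ → ℝ := fun n => (l (G (z n)) - l (G xs)) / t n with hrdef
      have htr : Tendsto r atTop (𝓝 (l (fderiv ℝ G xs h))) := by
        have hgd : HasDerivAt (fun s : ℝ => l (G (xs + s • h))) (l (fderiv ℝ G xs h)) 0 := by
          have hc : HasDerivAt (fun s : ℝ => xs + s • h) h 0 := by
            simpa using (((hasDerivAt_id (0:ℝ)).smul_const h).const_add xs)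
          have h1 : HasFDerivAt (fun x' => l (G x')) (l.comp (fderiv ℝ G xs))
              (xs + (0:ℝ) • h) := by
            simpa [Function.comp_def] using (l.hasFDerivAt.comp xs (hGdiff xs).hasFDerivAt)
          simpa [Function.comp_def] using h1.comp_hasDerivAt 0 hc
        have hslope := hasDerivAt_iff_tendsto_slope.mp hgd
        have htne : Tendsto t atTop (𝓝[≠] (0:ℝ)) := by
          refine tendsto_nhdsWithin_of_tendsto_nhds_of_eventually_within _ htt ?_
          exact Eventually.of_forall fun n => (ht0 n).ne'
        have h2 := hslope.comp htne
        refine h2.congr fun n => ?_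
        show slope (fun s : ℝ => l (G (xs + s • h))) 0 (t n) = r n
        rw [slope_def_field]
        simp [hrdef, hzdef]
      have hqr : ∀ n, 0 ≤ q n + r n := by
        intro n
        have hsaddle : Fmax f xs ≤ Fmax f (z n) + l (G (z n)) := hs1 (z n) (hzA n)
        have hgi : ⟪gradient (fun x' => f x' (ω n)) (z n), xs - z n⟫
            ≤ f xs (ω n) - f (z n) (ω n) := hgradineq (ω n) (z n) xs
        have hxz : xs - z n = (-(t n)) • h := by
          show xs - (xs + t n • h) = (-(t n)) • h
          module
        rw [hxz, real_inner_smul_right] at hgi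
        have h1 : f xs (ω n) ≤ Fmax f xs := le_Fmax hfc xs (ω n)
        have h2 : f (z n) (ω n) = Fmax f (z n) := hω n
        have h3 : t n * r n = l (G (z n)) - l (G xs) := by
          rw [hrdef]
          field_simp
          exact mul_div_cancel_left₀ _ (ht0 n).ne'
        have h4 := ht0 n
        have h5 : 0 ≤ t n * (q n + r n) := by nlinarith
        exact nonneg_of_mul_nonneg_right h5 h4
      have hQR : 0 ≤ Q + l (fderiv ℝ G xs h) :=
        ge_of_tendsto (htq.add (htr.mono_left inf_le_left)) (Eventually.of_forall hqr)
      have hact : ωb ∈ activeSet f xs := by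
        have hlim1 : Tendsto (fun n => f (z n) (ω n)) 𝒢 (𝓝 (f xs ωb)) := by
          have h1 : Tendsto (fun n => (z n, ω n)) 𝒢 (𝓝 (xs, ωb)) := htz.prodMk_nhds htω
          exact (hfc.tendsto _).comp h1
        have hlim2 : Tendsto (fun n => Fmax f (z n)) 𝒢 (𝓝 (Fmax f xs)) := by
          obtain ⟨ω₀, hω₀⟩ := exists_active hfc xs
          have hlb : ∀ n, f (z n) ω₀ ≤ Fmax f (z n) := fun n => le_Fmax hfc (z n) ω₀
          have hub : ∀ n, Fmax f (z n) ≤ (1 - t n) * Fmax f xs + t n * Fmax f (xs + h) := by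
            intro n
            have hcvx := (Fmax_convex hfc hfconv).2 (mem_univ (xs + h)) (mem_univ xs)
              (ht0 n).le (by linarith [ht1 n] : (0:ℝ) ≤ 1 - t n) (by ring)
            calc Fmax f (z n) = Fmax f (t n • (xs + h) + (1 - t n) • xs) := by
                  congr 1
                  show xs + t n • h = t n • (xs + h) + (1 - t n) • xs
                  module
              _ ≤ t n * Fmax f (xs + h) + (1 - t n) * Fmax f xs := by simpa using hcvx
              _ = (1 - t n) * Fmax f xs + t n * Fmax f (xs + h) := by ring
          have hl1 : Tendsto (fun n => f (z n) ω₀) 𝒢 (𝓝 (Fmax f xs)) := by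
            have h1 : Tendsto (fun n => f (z n) ω₀) 𝒢 (𝓝 (f xs ω₀)) :=
              ((hfc.tendsto _).comp (htz.prodMk_nhds tendsto_const_nhds))
            rwa [hω₀] at h1
          have hl2 : Tendsto (fun n => (1 - t n) * Fmax f xs + t n * Fmax f (xs + h)) 𝒢
              (𝓝 (Fmax f xs)) := by
            have h1 := (((tendsto_const_nhds : Tendsto (fun _ : ℕ => (1:ℝ)) 𝒢 (𝓝 1)).sub htt').mul
              (tendsto_const_nhds : Tendsto (fun _ : ℕ => Fmax f xs) 𝒢 _)).add
              (htt'.mul (tendsto_const_nhds : Tendsto (fun _ : ℕ => Fmax f (xs + h)) 𝒢 _))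
            simpa using h1
          exact tendsto_of_tendsto_of_tendsto_of_le_of_le hl1 hl2 hlb hub
        have hlim1' : Tendsto (fun n => Fmax f (z n)) 𝒢 (𝓝 (f xs ωb)) :=
          hlim1.congr fun n => hω n
        exact tendsto_nhds_unique hlim1' hlim2
      have hQle : Q ≤ Fdir f xs h := le_Fdir hfc hfg (mem_image_of_mem _ hact) h
      linarith
    rintro h ⟨a, v, hapos, hat, hvt, hmemA⟩
    obtain ⟨M, hM⟩ : ∃ M, ∀ w ∈ activeGrads f xs, ‖w‖ ≤ M :=
      isBounded_iff_forall_norm_le.mp (activeGrads_compact hfc hfg xs).isBounded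
    have hLip : ∀ u w : EuclideanSpace ℝ (Fin d),
        Fdir f xs u ≤ Fdir f xs w + M * ‖u - w‖ := by
      intro u w
      refine Fdir_le hfc ?_
      intro v' hv'
      have h2 : ⟪v', w⟫ ≤ Fdir f xs w := le_Fdir hfc hfg hv' w
      have h3 : ⟪v', u - w⟫ ≤ M * ‖u - w‖ :=
        (real_inner_le_norm v' _).trans
          (mul_le_mul_of_nonneg_right (hM v' hv') (norm_nonneg _))
      have h4 : ⟪v', u - w⟫ = ⟪v', u⟫ - ⟪v', w⟫ := inner_sub_right v' u w
      linarith
    have hnorm : Tendsto (fun n => ‖v n - h‖) atTop (𝓝 0) :=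
      tendsto_iff_norm_sub_tendsto_zero.mp hvt
    have hnorm' : Tendsto (fun n => M * ‖v n - h‖) atTop (𝓝 0) := by
      simpa using hnorm.const_mul M
    have hFt : Tendsto (fun n => Fdir f xs (v n)) atTop (𝓝 (Fdir f xs h)) := by
      refine tendsto_of_tendsto_of_tendsto_of_le_of_le
        (g := fun n => Fdir f xs h - M * ‖v n - h‖)
        (h := fun n => Fdir f xs h + M * ‖v n - h‖) ?_ ?_ ?_ ?_
      · simpa using (tendsto_const_nhds.sub hnorm')
      · simpa using (tendsto_const_nhds.add hnorm')
      · intro n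
        have := hLip h (v n)
        rw [norm_sub_rev] at this
        dsimp only
        linarith
      · intro n
        dsimp only
        exact hLip (v n) h
    have hlGt : Tendsto (fun n => l (fderiv ℝ G xs (v n))) atTop
        (𝓝 (l (fderiv ℝ G xs h))) := by
      have := ((l.comp (fderiv ℝ G xs)).continuous.tendsto h).comp hvt
      simpa [Function.comp_def] using this
    have hnn : ∀ n, 0 ≤ Fdir f xs (v n) + l (fderiv ℝ G xs (v n)) := by
      intro n
      have hx' := key (xs + a n • v n) (hmemA n)
      have hsub : (xs + a n • v n) - xs = a n • v n := add_sub_cancel_left xs _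
      rw [hsub] at hx'
      rw [Fdir_smul xs (hapos n).le, map_smul, map_smul, smul_eq_mul] at hx'
      have h5 : 0 ≤ a n * (Fdir f xs (v n) + l (fderiv ℝ G xs (v n))) := by
        rw [mul_add]; exact hx'
      exact nonneg_of_mul_nonneg_right h5 (hapos n)
    exact ge_of_tendsto (hFt.add hlGt) (Eventually.of_forall hnn)
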